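/- arXiv:2509.21471 — 3 statements merged into one kernel-verified Lean document; each statement's English description precedes it below -/
import Mathlib

section
/- With the 3D residual Stokeslet components S_diag(r) = Φ(r) − 2rφ(r) and S_offd(r) = Φ(r) + 2rφ(r), where Φ(r) = 2∫_r^∞ φ(t)dt, the mollified Stokeslet at the origin satisfies lim_{x→0} S_{M,jl}(x) = (1/(2π)) φ(0) δ_{jl}, where S_{M,jl}(x) = S_{jl}(x) − S_{R,jl}(x), S_{jl}(x) = (1/(8π))(δ_{jl}/r + x_j x_l/r³) and S_{R,jl}(x) = S_diag(r)δ_{jl}/(8πr) + S_offd(r) x_j x_l/(8πr³). -/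
open MeasureTheory Real Filter Topology

/-- with the 3D residual Stokeslet built from `S_diag(r) = Φ(r) - 2rφ(r)`
and `S_offd(r) = Φ(r) + 2rφ(r)`, `Φ(r) = 2∫_r^∞ φ`, the mollified Stokeslet
`S_M = S - S_R` tends to `(1/(2π)) φ(0) δ_{jl}` as `x → 0`. -/
theorem mollified_stokeslet_limit (φ : ℝ → ℝ)
    (hφsmooth : ContDiff ℝ (⊤ : ℕ∞) φ)
    (hφeven : ∀ x : ℝ, φ (-x) = φ x)
    (hφint : Integrable φ)
    (hφnorm : (∫ x : ℝ, φ x) = 1)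
    (Φ Sdiag Soffd : ℝ → ℝ)
    (hΦ : ∀ r : ℝ, Φ r = 2 * ∫ t in Set.Ioi r, φ t)
    (hSd : ∀ r : ℝ, Sdiag r = Φ r - 2 * r * φ r)
    (hSo : ∀ r : ℝ, Soffd r = Φ r + 2 * r * φ r)
    (j l : Fin 3) :
    Tendsto (fun x : EuclideanSpace ℝ (Fin 3) =>
        (1 / (8 * π)) * ((if j = l then (1 : ℝ) else 0) / ‖x‖ + x j * x l / ‖x‖ ^ 3)
        - (Sdiag ‖x‖ * (if j = l then (1 : ℝ) else 0) / (8 * π * ‖x‖)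
            + Soffd ‖x‖ * (x j * x l) / (8 * π * ‖x‖ ^ 3)))
      (𝓝[≠] (0 : EuclideanSpace ℝ (Fin 3)))
      (𝓝 ((1 / (2 * π)) * φ 0 * (if j = l then (1 : ℝ) else 0))) := by
  have hφcont : Continuous φ := hφsmooth.continuous
  set g : ℝ → ℝ := fun r => ∫ t in (0:ℝ)..r, φ t with hg
  -- Φ r = 1 - 2 * g r
  have hIic0 : (∫ t in Set.Iic (0:ℝ), φ t) = 1 / 2 := by
    have h1 : (∫ t in Set.Iic (0:ℝ), φ t) = ∫ t in Set.Ioi (0:ℝ), φ t := by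
      have h := integral_comp_neg_Iic (0:ℝ) φ
      simp only [hφeven, neg_zero] at h
      exact h
    have h2 : (∫ t in Set.Iic (0:ℝ), φ t) + (∫ t in Set.Ioi (0:ℝ), φ t) = 1 := by
      rw [intervalIntegral.integral_Iic_add_Ioi hφint.integrableOn hφint.integrableOn]
      exact hφnorm
    linarith [h1, h2]
  have hΦ' : ∀ r : ℝ, Φ r = 1 - 2 * g r := by
    intro r
    have h1 : (∫ t in Set.Iic r, φ t) - ∫ t in Set.Iic (0:ℝ), φ t = g r :=
      intervalIntegral.integral_Iic_sub_Iic hφint.integrableOn hφint.integrableOn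
    have h2 : (∫ t in Set.Iic r, φ t) + (∫ t in Set.Ioi r, φ t) = 1 := by
      rw [intervalIntegral.integral_Iic_add_Ioi hφint.integrableOn hφint.integrableOn]
      exact hφnorm
    rw [hΦ r]; linarith [h1, h2, hIic0]
  -- g r / r → φ 0
  have hderiv : HasDerivAt g (φ 0) 0 :=
    intervalIntegral.integral_hasDerivAt_right
      (hφint.intervalIntegrable) (hφcont.stronglyMeasurableAtFilter _ _)
      hφcont.continuousAt
  have hslope : Tendsto (fun r : ℝ => g r / r) (𝓝[≠] (0:ℝ)) (𝓝 (φ 0)) := by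
    have := hasDerivAt_iff_tendsto_slope.1 hderiv
    refine this.congr' ?_
    filter_upwards [self_mem_nhdsWithin] with r hr
    simp [slope_def_field, hg, div_eq_inv_mul]
  -- norm tends to 0 within ≠ 0
  have hnorm : Tendsto (fun x : EuclideanSpace ℝ (Fin 3) => ‖x‖)
      (𝓝[≠] (0 : EuclideanSpace ℝ (Fin 3))) (𝓝[≠] (0:ℝ)) := by
    apply tendsto_nhdsWithin_of_tendsto_nhds_of_eventually_within
    · exact tendsto_norm_zero.mono_left nhdsWithin_le_nhds
    · filter_upwards [self_mem_nhdsWithin] with x hx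
      simpa using norm_ne_zero_iff.2 hx
  have hφn : Tendsto (fun x : EuclideanSpace ℝ (Fin 3) => φ ‖x‖)
      (𝓝[≠] (0 : EuclideanSpace ℝ (Fin 3))) (𝓝 (φ 0)) := by
    have : Tendsto (fun x : EuclideanSpace ℝ (Fin 3) => ‖x‖)
        (𝓝[≠] (0 : EuclideanSpace ℝ (Fin 3))) (𝓝 (0:ℝ)) :=
      tendsto_norm_zero.mono_left nhdsWithin_le_nhds
    exact (hφcont.continuousAt.tendsto).comp this
  have hgn : Tendsto (fun x : EuclideanSpace ℝ (Fin 3) => g ‖x‖ / ‖x‖)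
      (𝓝[≠] (0 : EuclideanSpace ℝ (Fin 3))) (𝓝 (φ 0)) := hslope.comp hnorm
  -- first piece: (1 - Sdiag ‖x‖)/‖x‖ → 4 φ 0
  have hA : Tendsto (fun x : EuclideanSpace ℝ (Fin 3) => (1 - Sdiag ‖x‖) / ‖x‖)
      (𝓝[≠] (0 : EuclideanSpace ℝ (Fin 3))) (𝓝 (4 * φ 0)) := by
    have h := (hgn.const_mul 2).add (hφn.const_mul 2)
    have : (2 : ℝ) * φ 0 + 2 * φ 0 = 4 * φ 0 := by ring
    rw [this] at h
    refine h.congr' ?_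
    filter_upwards [self_mem_nhdsWithin] with x hx
    have hr : ‖x‖ ≠ 0 := norm_ne_zero_iff.2 hx
    rw [hSd, hΦ']
    field_simp
    ring
  -- second piece: (1 - Soffd ‖x‖)/‖x‖ → 0
  have hB : Tendsto (fun x : EuclideanSpace ℝ (Fin 3) => (1 - Soffd ‖x‖) / ‖x‖)
      (𝓝[≠] (0 : EuclideanSpace ℝ (Fin 3))) (𝓝 0) := by
    have h := (hgn.const_mul 2).sub (hφn.const_mul 2)
    rw [sub_self] at h
    refine h.congr' ?_
    filter_upwards [self_mem_nhdsWithin] with x hx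
    have hr : ‖x‖ ≠ 0 := norm_ne_zero_iff.2 hx
    rw [hSo, hΦ']
    field_simp
    ring
  -- bound on coordinates
  have hcoord : ∀ (x : EuclideanSpace ℝ (Fin 3)) (i : Fin 3), |x i| ≤ ‖x‖ := by
    intro x i
    rw [EuclideanSpace.norm_eq]
    rw [show |x i| = Real.sqrt (|x i| ^ 2) by rw [Real.sqrt_sq (abs_nonneg _)]]
    apply Real.sqrt_le_sqrt
    exact Finset.single_le_sum (f := fun k => ‖x k‖ ^ 2)
      (fun k _ => by positivity) (Finset.mem_univ i)
  have hq : ∀ x : EuclideanSpace ℝ (Fin 3), |x j * x l / ‖x‖ ^ 2| ≤ 1 := by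
    intro x
    rcases eq_or_ne x 0 with rfl | hx
    · simp
    · have hr : (0:ℝ) < ‖x‖ := norm_pos_iff.2 hx
      rw [abs_div, abs_mul, abs_pow, abs_norm, div_le_one (by positivity)]
      calc |x j| * |x l| ≤ ‖x‖ * ‖x‖ :=
            mul_le_mul (hcoord x j) (hcoord x l) (abs_nonneg _) (norm_nonneg _)
        _ = ‖x‖ ^ 2 := by ring
  -- second piece with the bounded factor tends to 0
  have hC : Tendsto (fun x : EuclideanSpace ℝ (Fin 3) =>
      (1 - Soffd ‖x‖) / ‖x‖ * (x j * x l / ‖x‖ ^ 2))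
      (𝓝[≠] (0 : EuclideanSpace ℝ (Fin 3))) (𝓝 0) := by
    refine squeeze_zero_norm
      (a := fun x : EuclideanSpace ℝ (Fin 3) => |(1 - Soffd ‖x‖) / ‖x‖|)
      (fun x => ?_) (by simpa using hB.abs)
    rw [norm_mul, Real.norm_eq_abs, Real.norm_eq_abs]
    calc |(1 - Soffd ‖x‖) / ‖x‖| * |x j * x l / ‖x‖ ^ 2|
        ≤ |(1 - Soffd ‖x‖) / ‖x‖| * 1 :=
          mul_le_mul_of_nonneg_left (hq x) (abs_nonneg _)
      _ = |(1 - Soffd ‖x‖) / ‖x‖| := mul_one _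
  -- combine
  have hfinal := ((hA.mul_const (if j = l then (1:ℝ) else 0)).add hC).const_mul (1 / (8 * π))
  have hval : 1 / (8 * π) * (4 * φ 0 * (if j = l then (1:ℝ) else 0) + 0)
      = (1 / (2 * π)) * φ 0 * (if j = l then (1:ℝ) else 0) := by
    have hπ : (π : ℝ) ≠ 0 := Real.pi_ne_zero
    split_ifs <;> field_simp <;> ring
  rw [hval] at hfinal
  refine hfinal.congr' ?_
  filter_upwards [self_mem_nhdsWithin] with x hx
  have hr : ‖x‖ ≠ 0 := norm_ne_zero_iff.2 hx
  have hπ : (π : ℝ) ≠ 0 := Real.pi_ne_zero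
  split_ifs <;> field_simp <;> ring
end

section
/- With the 3D residual stresslet components T_diag(r) = −2r²φ'(r) and T_offd(r) = Φ(r) + 2rφ(r) − (2/3)r²φ'(r), one has lim_{r→0} (1 − T_offd(r))/r² = 0 and lim_{r→0} T_diag(r)/r² = 0; consequently the mollified stresslet T_{M,jlm}(x) = T_{jlm}(x) − T_{R,jlm}(x) tends to 0 as x → 0. -/
open MeasureTheory Real Filter Topology

lemma aux_coord_le_norm (x : EuclideanSpace ℝ (Fin 3)) (i : Fin 3) : |x i| ≤ ‖x‖ := by
  rw [EuclideanSpace.norm_eq]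
  have h1 : |x i| = Real.sqrt (|x i| ^ 2) := by
    rw [Real.sqrt_sq (abs_nonneg _)]
  rw [h1]
  apply Real.sqrt_le_sqrt
  exact Finset.single_le_sum (f := fun k => |x k| ^ 2)
    (fun k _ => by positivity) (Finset.mem_univ i)

lemma aux_deriv_even_zero (φ : ℝ → ℝ) (hd : DifferentiableAt ℝ φ 0)
    (he : ∀ x, φ (-x) = φ x) : deriv φ 0 = 0 := by
  have h1 : HasDerivAt φ (deriv φ 0) 0 := hd.hasDerivAt
  have h2 : HasDerivAt (fun x : ℝ => φ (-x)) (deriv φ 0 * (-1)) 0 := by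
    have h1' : HasDerivAt φ (deriv φ 0) (-(0:ℝ)) := by simpa using h1
    have := h1'.comp (0:ℝ) (hasDerivAt_neg (0:ℝ))
    exact this
  have h3 : HasDerivAt φ (deriv φ 0 * (-1)) 0 := by
    have : (fun x : ℝ => φ (-x)) = φ := funext he
    rwa [this] at h2
  have := h1.unique h3
  linarith

set_option maxHeartbeats 1000000 in
/-- with the 3D residual stresslet components `T_diag(r) = -2r²φ'(r)` and
`T_offd(r) = Φ(r) + 2rφ(r) - (2/3)r²φ'(r)`, one has
`lim_{r→0} (1 - T_offd(r))/r² = 0` and `lim_{r→0} T_diag(r)/r² = 0`; consequently the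
mollified stresslet `T_M = T - T_R` tends to `0` as `x → 0`. -/
theorem mollified_stresslet_limit (φ : ℝ → ℝ)
    (hφsmooth : ContDiff ℝ (⊤ : ℕ∞) φ)
    (hφeven : ∀ x : ℝ, φ (-x) = φ x)
    (hφint : Integrable φ)
    (hφnorm : (∫ x : ℝ, φ x) = 1)
    (Φ Tdiag Toffd : ℝ → ℝ)
    (hΦ : ∀ r : ℝ, Φ r = 2 * ∫ t in Set.Ioi r, φ t)
    (hTd : ∀ r : ℝ, Tdiag r = -2 * r ^ 2 * deriv φ r)
    (hTo : ∀ r : ℝ, Toffd r = Φ r + 2 * r * φ r - 2 / 3 * r ^ 2 * deriv φ r)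
    (j l m : Fin 3) :
    Tendsto (fun r : ℝ => (1 - Toffd r) / r ^ 2) (𝓝[>] (0 : ℝ)) (𝓝 0) ∧
    Tendsto (fun r : ℝ => Tdiag r / r ^ 2) (𝓝[>] (0 : ℝ)) (𝓝 0) ∧
    Tendsto (fun x : EuclideanSpace ℝ (Fin 3) =>
        -(3 / (4 * π)) * (x j * x l * x m) / ‖x‖ ^ 5
        - (((if j = l then (1 : ℝ) else 0) * x m + (if l = m then (1 : ℝ) else 0) * x j
              + (if m = j then (1 : ℝ) else 0) * x l) / (8 * π * ‖x‖ ^ 3) * Tdiag ‖x‖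
            - 3 / (4 * π) * (x j * x l * x m / ‖x‖ ^ 5) * Toffd ‖x‖))
      (𝓝[≠] (0 : EuclideanSpace ℝ (Fin 3))) (𝓝 0) := by
  have pi_pos := Real.pi_pos
  have hφcont : Continuous φ := hφsmooth.continuous
  have hφdiff : Differentiable ℝ φ := hφsmooth.differentiable (by simp)
  have hd1 : ContDiff ℝ ((⊤ : ℕ∞) : WithTop ℕ∞) (deriv φ) :=
    (contDiff_infty_iff_deriv.mp (hφsmooth.of_le (by simp))).2
  have hdcont : Continuous (deriv φ) := hd1.continuous
  have hd2cont : Continuous (deriv (deriv φ)) := hd1.continuous_deriv (by simp)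
  have hderiv0 : deriv φ 0 = 0 := aux_deriv_even_zero φ (hφdiff 0) hφeven
  -- half-line integral
  have hIic : (∫ t in Set.Iic (0:ℝ), φ t) = 1/2 := by
    have hsym : (∫ t in Set.Ioi (0:ℝ), φ t) = ∫ t in Set.Iic (0:ℝ), φ t := by
      have := integral_comp_neg_Ioi (c := (0:ℝ)) (f := φ)
      simpa [hφeven] using this
    have hadd := intervalIntegral.integral_Iic_add_Ioi (b := (0:ℝ))
      hφint.integrableOn hφint.integrableOn
    rw [hφnorm] at hadd
    linarith
  have hΦeq : ∀ r : ℝ, Φ r = 1 - 2 * ∫ t in (0:ℝ)..r, φ t := by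
    intro r
    have h1 := intervalIntegral.integral_Iic_add_Ioi (b := r)
      hφint.integrableOn hφint.integrableOn
    have h2 := intervalIntegral.integral_Iic_sub_Iic (f := φ) (μ := volume)
      (a := (0:ℝ)) (b := r) hφint.integrableOn hφint.integrableOn
    rw [hφnorm] at h1
    rw [hΦ r]
    rw [hIic] at h2
    linarith
  -- the auxiliary function g
  set g : ℝ → ℝ := fun r => 2 * (∫ t in (0:ℝ)..r, φ t) - 2 * r * φ r
      + 2/3 * r^2 * deriv φ r with hgdef
  have hTo_g : ∀ r : ℝ, 1 - Toffd r = g r := by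
    intro r
    rw [hTo r, hΦeq r, hgdef]
    ring
  have hInt : ∀ x : ℝ, HasDerivAt (fun r => ∫ t in (0:ℝ)..r, φ t) (φ x) x := fun x =>
    intervalIntegral.integral_hasDerivAt_right hφint.intervalIntegrable
      (hφcont.stronglyMeasurableAtFilter _ _) hφcont.continuousAt
  have hgd : ∀ x : ℝ, HasDerivAt g
      (-(2/3) * x * deriv φ x + 2/3 * x^2 * deriv (deriv φ) x) x := by
    intro x
    have h1 : HasDerivAt (fun r => 2 * ∫ t in (0:ℝ)..r, φ t) (2 * φ x) x :=
      (hInt x).const_mul 2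
    have h2 : HasDerivAt (fun r : ℝ => 2 * r * φ r)
        (2 * 1 * φ x + 2 * x * deriv φ x) x := by
      exact ((hasDerivAt_id x).const_mul 2).mul (hφdiff x).hasDerivAt
    have h3 : HasDerivAt (fun r : ℝ => 2/3 * r^2 * deriv φ r)
        (2/3 * (2 * x^1) * deriv φ x + 2/3 * x^2 * deriv (deriv φ) x) x := by
      exact ((hasDerivAt_pow 2 x).const_mul (2/3 : ℝ)).mul
        ((hd1.differentiable (by simp) x).hasDerivAt)
    have h := (h1.sub h2).add h3
    exact h.congr_deriv (by ring)
  have hgcont : Continuous g := by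
    rw [continuous_iff_continuousAt]
    exact fun x => (hgd x).differentiableAt.continuousAt
  have hg0 : g 0 = 0 := by
    simp [hgdef]
  -- limit 1
  have lim1 : Tendsto (fun r : ℝ => (1 - Toffd r) / r ^ 2) (𝓝[>] (0 : ℝ)) (𝓝 0) := by
    have hsq : ∀ x : ℝ, HasDerivAt (fun r : ℝ => r^2) (2*x) x := by
      intro x; simpa using hasDerivAt_pow 2 x
    have key : Tendsto (fun r : ℝ => g r / r ^ 2) (𝓝[>] (0 : ℝ)) (𝓝 0) := by
      apply HasDerivAt.lhopital_zero_nhdsGT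
        (f' := fun x => -(2/3) * x * deriv φ x + 2/3 * x^2 * deriv (deriv φ) x)
        (g' := fun x : ℝ => 2*x)
      · exact Eventually.of_forall hgd
      · exact Eventually.of_forall hsq
      · filter_upwards [self_mem_nhdsWithin] with x hx
        have : (0:ℝ) < x := hx
        positivity
      · have : Tendsto g (𝓝 0) (𝓝 0) := by
          have := hgcont.tendsto 0
          rwa [hg0] at this
        exact this.mono_left nhdsWithin_le_nhds
      · have : Tendsto (fun r : ℝ => r^2) (𝓝 (0:ℝ)) (𝓝 0) := by
          have := (continuous_pow 2 (M := ℝ)).tendsto 0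
          simpa using this
        exact this.mono_left nhdsWithin_le_nhds
      · have hc : Tendsto (fun x : ℝ => -(1/3) * deriv φ x + 1/3 * x * deriv (deriv φ) x)
            (𝓝 0) (𝓝 0) := by
          have : Continuous (fun x : ℝ => -(1/3) * deriv φ x + 1/3 * x * deriv (deriv φ) x) := by
            continuity
          have h := this.tendsto 0
          simpa [hderiv0] using h
        apply Tendsto.congr' _ (hc.mono_left nhdsWithin_le_nhds)
        filter_upwards [self_mem_nhdsWithin] with x hx
        have hx0 : x ≠ 0 := ne_of_gt hx
        field_simp
    apply key.congr
    intro r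
    rw [hTo_g r]
  -- limit 2
  have lim2 : Tendsto (fun r : ℝ => Tdiag r / r ^ 2) (𝓝[>] (0 : ℝ)) (𝓝 0) := by
    have hc : Tendsto (fun r : ℝ => -2 * deriv φ r) (𝓝 (0:ℝ)) (𝓝 0) := by
      have : Continuous (fun r : ℝ => -2 * deriv φ r) := by continuity
      simpa [hderiv0] using this.tendsto 0
    apply Tendsto.congr' _ (hc.mono_left nhdsWithin_le_nhds)
    filter_upwards [self_mem_nhdsWithin] with r hr
    have hr0 : r ≠ 0 := ne_of_gt hr
    rw [hTd r]
    field_simp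
  refine ⟨lim1, lim2, ?_⟩
  -- limit 3
  set h : ℝ → ℝ := fun r => 3/(4*π) * |(1 - Toffd r)/r^2| + 3/(8*π) * |Tdiag r/r^2|
    with hhdef
  have hh : Tendsto h (𝓝[>] (0:ℝ)) (𝓝 0) := by
    have h1 : Tendsto (fun r : ℝ => 3/(4*π) * |(1 - Toffd r)/r^2|) (𝓝[>] (0:ℝ)) (𝓝 0) := by
      have := (lim1.abs).const_mul (3/(4*π))
      simpa using this
    have h2 : Tendsto (fun r : ℝ => 3/(8*π) * |Tdiag r/r^2|) (𝓝[>] (0:ℝ)) (𝓝 0) := by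
      have := (lim2.abs).const_mul (3/(8*π))
      simpa using this
    simpa using h1.add h2
  have hnorm : Tendsto (fun x : EuclideanSpace ℝ (Fin 3) => ‖x‖)
      (𝓝[≠] (0 : EuclideanSpace ℝ (Fin 3))) (𝓝[>] (0:ℝ)) := by
    rw [tendsto_nhdsWithin_iff]
    constructor
    · exact tendsto_norm_zero.mono_left nhdsWithin_le_nhds
    · filter_upwards [self_mem_nhdsWithin] with x hx
      exact norm_pos_iff.mpr hx
  refine squeeze_zero_norm' ?_ (hh.comp hnorm)
  filter_upwards [self_mem_nhdsWithin] with x hx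
  have hr : (0:ℝ) < ‖x‖ := norm_pos_iff.mpr hx
  set r : ℝ := ‖x‖ with hrdef
  have hr0 : r ≠ 0 := ne_of_gt hr
  set P : ℝ := x j * x l * x m with hPdef
  set D : ℝ := (if j = l then (1 : ℝ) else 0) * x m + (if l = m then (1 : ℝ) else 0) * x j
      + (if m = j then (1 : ℝ) else 0) * x l with hDdef
  set A : ℝ := 1 - Toffd r with hAdef
  set B : ℝ := Tdiag r with hBdef
  have hPr : |P| ≤ r^3 := by
    rw [hPdef, abs_mul, abs_mul]
    have h1 := aux_coord_le_norm x j
    have h2 := aux_coord_le_norm x l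
    have h3 := aux_coord_le_norm x m
    calc |x j| * |x l| * |x m| ≤ r * r * r := by
          apply mul_le_mul (mul_le_mul h1 h2 (abs_nonneg _) hr.le) h3 (abs_nonneg _)
          positivity
      _ = r^3 := by ring
  have hDr : |D| ≤ 3 * r := by
    rw [hDdef]
    have key : ∀ (c : Prop) [Decidable c] (i : Fin 3),
        |(if c then (1:ℝ) else 0) * x i| ≤ r := by
      intro c _ i
      split_ifs with hc
      · simpa using aux_coord_le_norm x i
      · simpa using hr.le
    calc |(if j = l then (1 : ℝ) else 0) * x m + (if l = m then (1 : ℝ) else 0) * x j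
          + (if m = j then (1 : ℝ) else 0) * x l|
        ≤ |(if j = l then (1 : ℝ) else 0) * x m + (if l = m then (1 : ℝ) else 0) * x j|
          + |(if m = j then (1 : ℝ) else 0) * x l| := abs_add_le _ _
      _ ≤ |(if j = l then (1 : ℝ) else 0) * x m| + |(if l = m then (1 : ℝ) else 0) * x j|
          + |(if m = j then (1 : ℝ) else 0) * x l| := by
          gcongr
          exact abs_add_le _ _
      _ ≤ r + r + r := by
          gcongr <;> exact key _ _
      _ = 3 * r := by ring
  have hE : -(3 / (4 * π)) * (x j * x l * x m) / ‖x‖ ^ 5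
      - (D / (8 * π * ‖x‖ ^ 3) * Tdiag ‖x‖
        - 3 / (4 * π) * (x j * x l * x m / ‖x‖ ^ 5) * Toffd ‖x‖)
      = -((3/(4*π)) * (P/r^5) * A) + -(D * B / (8*π*r^3)) := by
    rw [hAdef, hBdef, hPdef, hrdef]
    ring
  have t1 : |(3/(4*π)) * (P/r^5) * A| ≤ 3/(4*π) * (|A|/r^2) := by
    rw [abs_mul, abs_mul, abs_of_pos (by positivity : (0:ℝ) < 3/(4*π)), abs_div,
      abs_of_pos (by positivity : (0:ℝ) < r^5)]
    have step : 3/(4*π) * (|P|/r^5) * |A| ≤ 3/(4*π) * (r^3/r^5) * |A| := by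
      gcongr
    refine step.trans (le_of_eq ?_)
    rw [show r^3/r^5 = 1/r^2 by field_simp]
    ring
  have t2 : |D * B / (8*π*r^3)| ≤ 3/(8*π) * (|B|/r^2) := by
    rw [abs_div, abs_mul, abs_of_pos (by positivity : (0:ℝ) < 8*π*r^3)]
    have step : |D| * |B| / (8*π*r^3) ≤ (3*r) * |B| / (8*π*r^3) := by
      gcongr
    refine step.trans (le_of_eq ?_)
    field_simp
  have hhval : (h ∘ fun x : EuclideanSpace ℝ (Fin 3) => ‖x‖) x
      = 3/(4*π) * (|A|/r^2) + 3/(8*π) * (|B|/r^2) := by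
    simp only [Function.comp, hhdef, ← hrdef, ← hAdef, ← hBdef]
    rw [abs_div, abs_div, abs_of_pos (by positivity : (0:ℝ) < r^2)]
  rw [Real.norm_eq_abs, hE, hhval]
  calc |-((3/(4*π)) * (P/r^5) * A) + -(D * B / (8*π*r^3))|
      ≤ |-((3/(4*π)) * (P/r^5) * A)| + |-(D * B / (8*π*r^3))| := abs_add_le _ _
    _ = |(3/(4*π)) * (P/r^5) * A| + |D * B / (8*π*r^3)| := by rw [abs_neg, abs_neg]
    _ ≤ 3/(4*π) * (|A|/r^2) + 3/(8*π) * (|B|/r^2) := add_le_add t1 t2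
end

section
/- The 3D radial Fourier transform of the truncated biharmonic kernel B^R(r) = −(1/(8π))(r − R/2 − r²/(2R))·1_{[0,R]}(r) equals (1/k⁴)(1 + (1/2)cos(kR) − (3/2)sin(kR)/(kR)) for k > 0; in particular it is O(k^{−4}) as k → ∞ and extends continuously (smoothly) to k = 0. -/
open MeasureTheory Real


lemma aux_summable {f : ℕ → ℝ} (C y : ℝ) (h : ∀ m, |f m| ≤ C * (y ^ m / m.factorial)) :
    Summable f :=
  Summable.of_norm_bounded ((Real.summable_pow_div_factorial y).mul_left C) h

lemma fact_mono_real {a b : ℕ} (h : a ≤ b) : ((a.factorial : ℝ)) ≤ (b.factorial : ℝ) := by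
  exact_mod_cast Nat.factorial_le h

lemma summable_S2 (x : ℝ) : Summable (fun m : ℕ => (-1:ℝ)^m * x^(2*m+5) / (2*m+4).factorial) := by
  apply aux_summable (|x|^5) (x^2)
  intro m
  have h1 : |(-1:ℝ)^m * x^(2*m+5) / (2*m+4).factorial| = |x|^(2*m+5) / (2*m+4).factorial := by
    rw [abs_div, abs_mul, abs_pow, abs_neg, abs_one, one_pow, one_mul, abs_pow,
      Nat.abs_cast]
  rw [h1]
  have h2 : |x|^(2*m+5) = |x|^5 * (x^2)^m := by
    rw [← sq_abs]; ring
  rw [h2, mul_div_assoc]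
  apply mul_le_mul_of_nonneg_left _ (by positivity)
  apply div_le_div_of_nonneg_left (by positivity) (by positivity)
  exact fact_mono_real (by omega)

lemma summable_S3 (x : ℝ) : Summable (fun m : ℕ => (-1:ℝ)^m * x^(2*m+5) / (2*m+5).factorial) := by
  apply aux_summable (|x|^5) (x^2)
  intro m
  have h1 : |(-1:ℝ)^m * x^(2*m+5) / (2*m+5).factorial| = |x|^(2*m+5) / (2*m+5).factorial := by
    rw [abs_div, abs_mul, abs_pow, abs_neg, abs_one, one_pow, one_mul, abs_pow,
      Nat.abs_cast]
  rw [h1]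
  have h2 : |x|^(2*m+5) = |x|^5 * (x^2)^m := by
    rw [← sq_abs]; ring
  rw [h2, mul_div_assoc]
  apply mul_le_mul_of_nonneg_left _ (by positivity)
  apply div_le_div_of_nonneg_left (by positivity) (by positivity)
  exact fact_mono_real (by omega)

lemma summable_cos (x : ℝ) : Summable (fun n : ℕ => (-1:ℝ)^n * x^(2*n) / (2*n).factorial) := by
  apply aux_summable 1 (x^2)
  intro m
  have h1 : |(-1:ℝ)^m * x^(2*m) / (2*m).factorial| = |x|^(2*m) / (2*m).factorial := by
    rw [abs_div, abs_mul, abs_pow, abs_neg, abs_one, one_pow, one_mul, abs_pow,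
      Nat.abs_cast]
  rw [h1, one_mul]
  have h2 : |x|^(2*m) = (x^2)^m := by
    rw [← sq_abs]; ring
  rw [h2]
  apply div_le_div_of_nonneg_left (by positivity) (by positivity)
  exact fact_mono_real (by omega)

lemma summable_sin (x : ℝ) : Summable (fun n : ℕ => (-1:ℝ)^n * x^(2*n+1) / (2*n+1).factorial) := by
  apply aux_summable |x| (x^2)
  intro m
  have h1 : |(-1:ℝ)^m * x^(2*m+1) / (2*m+1).factorial| = |x|^(2*m+1) / (2*m+1).factorial := by
    rw [abs_div, abs_mul, abs_pow, abs_neg, abs_one, one_pow, one_mul, abs_pow,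
      Nat.abs_cast]
  rw [h1]
  have h2 : |x|^(2*m+1) = |x| * (x^2)^m := by
    rw [← sq_abs]; ring
  rw [h2, mul_div_assoc]
  apply mul_le_mul_of_nonneg_left _ (by positivity)
  apply div_le_div_of_nonneg_left (by positivity) (by positivity)
  exact fact_mono_real (by omega)

lemma tsum_shift2 {f : ℕ → ℝ} (hf : Summable f) :
    ∑' n, f n = f 0 + f 1 + ∑' n, f (n + 2) := by
  rw [Summable.tsum_eq_zero_add hf, Summable.tsum_eq_zero_add ((summable_nat_add_iff 1).2 hf)]
  have h : ∀ b : ℕ, f (b + 1 + 1) = f (b + 2) := fun b => by congr 1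
  rw [tsum_congr h]
  ring

lemma key (x : ℝ) :
    ∑' m : ℕ, ((-1:ℝ))^m * (m+1) * x^(2*m+5) / (2*m+5).factorial
      = x + x * Real.cos x / 2 - 3/2 * Real.sin x := by
  have h1 : ∀ m : ℕ, ((-1:ℝ))^m * (m+1) * x^(2*m+5) / (2*m+5).factorial
      = 1/2 * ((-1:ℝ)^m * x^(2*m+5) / (2*m+4).factorial)
        - 3/2 * ((-1:ℝ)^m * x^(2*m+5) / (2*m+5).factorial) := by
    intro m
    have hf : ((2*m+5).factorial : ℝ) = (2*m+5) * (2*m+4).factorial := by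
      exact_mod_cast Nat.factorial_succ (2*m+4)
    have hne : ((2*m+4).factorial : ℝ) ≠ 0 := by positivity
    rw [hf]
    field_simp
    ring
  rw [tsum_congr h1, Summable.tsum_sub ((summable_S2 x).mul_left _) ((summable_S3 x).mul_left _),
    tsum_mul_left, tsum_mul_left]
  have hcos2 : Real.cos x = 1 + (-(x^2)/2)
      + ∑' n : ℕ, (-1:ℝ)^(n+2) * x^(2*(n+2)) / (2*(n+2)).factorial := by
    rw [Real.cos_eq_tsum x]
    have := tsum_shift2 (summable_cos x)
    rw [this]
    norm_num [Nat.factorial]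
  have hsin2 : Real.sin x = x + (-(x^3)/6)
      + ∑' n : ℕ, (-1:ℝ)^(n+2) * x^(2*(n+2)+1) / (2*(n+2)+1).factorial := by
    rw [Real.sin_eq_tsum x]
    have := tsum_shift2 (summable_sin x)
    rw [this]
    norm_num [Nat.factorial]
  have e2 : ∑' m : ℕ, (-1:ℝ)^m * x^(2*m+5) / (2*m+4).factorial
      = x * (Real.cos x - 1 + x^2/2) := by
    have hx : Real.cos x - 1 + x^2/2
        = ∑' n : ℕ, (-1:ℝ)^(n+2) * x^(2*(n+2)) / (2*(n+2)).factorial := by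
      linarith [hcos2]
    rw [hx, ← tsum_mul_left]
    apply tsum_congr
    intro m
    have h4 : 2*(m+2) = 2*m+4 := by omega
    rw [h4]
    ring
  have e3 : ∑' m : ℕ, (-1:ℝ)^m * x^(2*m+5) / (2*m+5).factorial
      = Real.sin x - x + x^3/6 := by
    have hx : Real.sin x - x + x^3/6
        = ∑' n : ℕ, (-1:ℝ)^(n+2) * x^(2*(n+2)+1) / (2*(n+2)+1).factorial := by
      linarith [hsin2]
    rw [hx]
    apply tsum_congr
    intro m
    have h4 : 2*(m+2)+1 = 2*m+5 := by omega
    rw [h4]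
    ring
  rw [e2, e3]
  ring

lemma fact_div_le (n j : ℕ) (hj : n + 1 ≤ j) : ((n:ℝ)+1) / j.factorial ≤ 1 / n.factorial := by
  rw [div_le_div_iff₀ (by positivity) (by positivity), one_mul]
  have h : ((n+1) * n.factorial : ℕ) ≤ j.factorial := by
    rw [← Nat.factorial_succ]; exact Nat.factorial_le hj
  calc ((n:ℝ)+1) * n.factorial = (((n+1) * n.factorial : ℕ) : ℝ) := by push_cast; ring
  _ ≤ (j.factorial : ℝ) := by exact_mod_cast h

open FormalMultilinearSeries in
/-- the 3D radial Fourier transform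
`f̂(k) = 4π ∫_0^∞ (sin(kr)/(kr)) f(r) r² dr` of the truncated biharmonic kernel
`B^R(r) = -(1/(8π))(r - R/2 - r²/(2R)) 1_{[0,R]}(r)` equals
`(1/k⁴)(1 + cos(kR)/2 - (3/2) sin(kR)/(kR))` for `k > 0`; in particular it is
`O(k^{-4})` as `k → ∞` and extends smoothly (hence continuously) to `k = 0`. -/
theorem fourier_truncated_biharmonic (R : ℝ) (hR : 0 < R)
    (BR : ℝ → ℝ)
    (hBR : ∀ r : ℝ, BR r =
      if r ≤ R then -(1 / (8 * π)) * (r - R / 2 - r ^ 2 / (2 * R)) else 0) :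
    (∀ k : ℝ, 0 < k →
      4 * π * (∫ r in Set.Ioi (0 : ℝ), Real.sin (k * r) / (k * r) * BR r * r ^ 2)
        = (1 / k ^ 4) * (1 + 1 / 2 * Real.cos (k * R)
            - 3 / 2 * Real.sin (k * R) / (k * R))) ∧
    (∃ C : ℝ, ∀ k : ℝ, 1 ≤ k →
      |(1 / k ^ 4) * (1 + 1 / 2 * Real.cos (k * R) - 3 / 2 * Real.sin (k * R) / (k * R))|
        ≤ C / k ^ 4) ∧
    (∃ g : ℝ → ℝ, ContDiff ℝ (⊤ : ℕ∞) g ∧ ∀ k : ℝ, 0 < k →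
      g k = (1 / k ^ 4) * (1 + 1 / 2 * Real.cos (k * R)
          - 3 / 2 * Real.sin (k * R) / (k * R))) := by
  refine ⟨?_, ?_, ?_⟩
  · intro k hk

    have hkne : k ≠ 0 := hk.ne'
    have hRne : R ≠ 0 := hR.ne'
    have hpi : (π : ℝ) ≠ 0 := Real.pi_ne_zero
    set g₀ : ℝ → ℝ := fun r => -(1/(8*π)) / k * (Real.sin (k*r) * (r^2 - R/2*r - r^3/(2*R))) with hg₀
    have hcont : Continuous g₀ := by
      apply Continuous.mul continuous_const
      exact (Real.continuous_sin.comp (continuous_const.mul continuous_id)).mul (by continuity)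
    -- split the integral
    have hsplit : Set.Ioi (0:ℝ) = Set.Ioc 0 R ∪ Set.Ioi R := (Set.Ioc_union_Ioi_eq_Ioi hR.le).symm
    have heq : Set.EqOn (fun r => Real.sin (k * r) / (k * r) * BR r * r ^ 2) g₀ (Set.Ioc 0 R) := by
      intro r hr
      have hr0 : (0:ℝ) < r := hr.1
      have hrR : r ≤ R := hr.2
      simp only [hBR r, if_pos hrR, hg₀]
      field_simp
    have hzero : Set.EqOn (fun r => Real.sin (k * r) / (k * r) * BR r * r ^ 2)
        (fun _ => (0:ℝ)) (Set.Ioi R) := by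
      intro r hr
      simp [hBR r, not_le.mpr (Set.mem_Ioi.mp hr)]
    have hint1 : IntegrableOn (fun r => Real.sin (k * r) / (k * r) * BR r * r ^ 2)
        (Set.Ioc 0 R) := by
      exact (hcont.integrableOn_Ioc).congr_fun (fun r hr => (heq hr).symm) measurableSet_Ioc
    have hint2 : IntegrableOn (fun r => Real.sin (k * r) / (k * r) * BR r * r ^ 2)
        (Set.Ioi R) := by
      exact (integrableOn_zero).congr_fun (fun r hr => (hzero hr).symm) measurableSet_Ioi
    rw [hsplit, setIntegral_union (Set.Ioc_disjoint_Ioi le_rfl) measurableSet_Ioi hint1 hint2,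
      setIntegral_congr_fun measurableSet_Ioi hzero, integral_zero, add_zero,
      setIntegral_congr_fun measurableSet_Ioc heq,
      ← intervalIntegral.integral_of_le hR.le]
    -- FTC
    set F : ℝ → ℝ := fun r => -(1/(8*π)) / (4*R*k^5) *
      ((8*R*k^2*r - 2*R^2*k^2 - 6*k^2*r^2 + 12) * Real.sin (k*r)
        + (2*k^3*r^3 - 4*R*k^3*r^2 + 2*R^2*k^3*r - 12*k*r + 8*R*k) * Real.cos (k*r)) with hF
    have hderiv : ∀ r ∈ Set.uIcc (0:ℝ) R, HasDerivAt F (g₀ r) r := by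
      intro r _
      have hkr : HasDerivAt (fun x:ℝ => k*x) k r := by
        simpa using (hasDerivAt_id r).const_mul k
      have hsin : HasDerivAt (fun x:ℝ => Real.sin (k*x)) (Real.cos (k*r) * k) r :=
        (Real.hasDerivAt_sin (k*r)).comp r hkr
      have hcos : HasDerivAt (fun x:ℝ => Real.cos (k*x)) (-Real.sin (k*r) * k) r :=
        (Real.hasDerivAt_cos (k*r)).comp r hkr
      have hPS : HasDerivAt (fun x:ℝ => 8*R*k^2*x - 2*R^2*k^2 - 6*k^2*x^2 + 12)
          (8*R*k^2 - 12*k^2*r) r := by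
        have h1 := (hasDerivAt_id r).const_mul (8*R*k^2)
        have h2 := (hasDerivAt_pow 2 r).const_mul (6*k^2)
        refine (((h1.sub_const (2*R^2*k^2)).sub h2).add_const 12).congr_deriv ?_
        push_cast; ring
      have hPC : HasDerivAt (fun x:ℝ => 2*k^3*x^3 - 4*R*k^3*x^2 + 2*R^2*k^3*x - 12*k*x + 8*R*k)
          (6*k^3*r^2 - 8*R*k^3*r + 2*R^2*k^3 - 12*k) r := by
        have h1 := (hasDerivAt_pow 3 r).const_mul (2*k^3)
        have h2 := (hasDerivAt_pow 2 r).const_mul (4*R*k^3)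
        have h3 := (hasDerivAt_id r).const_mul (2*R^2*k^3)
        have h4 := (hasDerivAt_id r).const_mul (12*k)
        refine ((((h1.sub h2).add h3).sub h4).add_const (8*R*k)).congr_deriv ?_
        push_cast; ring
      have := ((hPS.mul hsin).add (hPC.mul hcos)).const_mul (-(1/(8*π)) / (4*R*k^5))
      refine this.congr_deriv ?_
      rw [hg₀]
      field_simp
      ring
    rw [intervalIntegral.integral_eq_sub_of_hasDerivAt hderiv (hcont.intervalIntegrable 0 R), hF]
    simp only [mul_zero, Real.sin_zero, Real.cos_zero]
    field_simp
    ring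
  ·

    refine ⟨3, fun k hk => ?_⟩
    have hk0 : (0:ℝ) < k := lt_of_lt_of_le one_pos hk
    have hkR : (0:ℝ) < k * R := mul_pos hk0 hR
    have hs : |Real.sin (k*R) / (k*R)| ≤ 1 := by
      rw [abs_div]
      exact div_le_one_of_le₀ Real.abs_sin_le_abs (abs_nonneg _)
    have hc : |Real.cos (k*R)| ≤ 1 := Real.abs_cos_le_one _
    have hE : |1 + 1 / 2 * Real.cos (k * R) - 3 / 2 * Real.sin (k * R) / (k * R)| ≤ 3 := by
      have h1 := abs_le.1 hc
      have h2 := abs_le.1 hs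
      have h3 : 3 / 2 * Real.sin (k*R) / (k*R) = 3/2 * (Real.sin (k*R)/(k*R)) := by ring
      rw [h3]
      rw [abs_le]
      constructor
      · linarith [h1.1, h2.2]
      · linarith [h1.2, h2.1]
    rw [abs_mul, abs_of_pos (show (0:ℝ) < 1/k^4 by positivity)]
    calc 1/k^4 * |1 + 1 / 2 * Real.cos (k * R) - 3 / 2 * Real.sin (k * R) / (k * R)|
        ≤ 1/k^4 * 3 := by gcongr
    _ = 3 / k^4 := by ring
  ·

    set c : ℕ → ℝ := fun n =>
      if n % 2 = 0 then (-1:ℝ)^(n/2) * ((n/2 + 1 : ℕ) : ℝ) * R^(n+4) / (n+5).factorial else 0 with hc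
    refine ⟨ofScalarsSum c, ?_, ?_⟩
    · -- analyticity
      have hrad : (ofScalars ℝ c).radius = ⊤ := by
        apply FormalMultilinearSeries.radius_eq_top_of_summable_norm
        intro r
        have hr0 : (0:ℝ) ≤ (r:ℝ) := r.coe_nonneg
        apply Summable.congr (f := fun n => |c n| * (r:ℝ)^n)
        · apply aux_summable (R^4) (R*r)
          intro n
          have hRn : (0:ℝ) ≤ R^(n+4) := pow_nonneg hR.le _
          have hrn : (0:ℝ) ≤ (r:ℝ)^n := pow_nonneg hr0 _
          have hRrn : (0:ℝ) ≤ (R*(r:ℝ))^n := pow_nonneg (mul_nonneg hR.le hr0) _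
          rw [abs_of_nonneg (mul_nonneg (abs_nonneg _) hrn)]
          rcases Nat.even_or_odd n with he | ho
          · have h2 : n % 2 = 0 := Nat.even_iff.mp he
            have habs : |c n| = ((n/2 + 1 : ℕ) : ℝ) * R^(n+4) / (n+5).factorial := by
              rw [hc]
              simp only [if_pos h2]
              rw [abs_div, abs_mul, abs_mul, abs_pow, abs_neg, abs_one, one_pow, one_mul,
                abs_of_pos (pow_pos hR _), Nat.abs_cast]
              congr 1
              rw [abs_of_nonneg (by positivity)]
            rw [habs]
            calc ((n/2 + 1 : ℕ) : ℝ) * R^(n+4) / (n+5).factorial * (r:ℝ)^n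
                = ((n/2 + 1 : ℕ) : ℝ) * (R^(n+4) * (r:ℝ)^n) / (n+5).factorial := by ring
            _ ≤ ((n:ℝ)+1) * (R^(n+4) * (r:ℝ)^n) / (n+5).factorial := by
                gcongr
                have : n/2 + 1 ≤ n + 1 := by omega
                exact_mod_cast this
            _ = (R^4 * (R*(r:ℝ))^n) * (((n:ℝ)+1) / (n+5).factorial) := by
                rw [mul_pow]; ring
            _ ≤ (R^4 * (R*(r:ℝ))^n) * (1 / n.factorial) := by
                apply mul_le_mul_of_nonneg_left (fact_div_le n (n+5) (by omega))
                exact mul_nonneg (by positivity) hRrn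
            _ = R^4 * ((R*(r:ℝ))^n / n.factorial) := by ring
          · have h2 : n % 2 = 1 := Nat.odd_iff.mp ho
            have hzero : c n = 0 := by rw [hc]; simp [h2]
            rw [hzero, abs_zero, zero_mul]
            exact mul_nonneg (by positivity) (div_nonneg hRrn (by positivity))
        · intro n
          rw [ofScalars_norm, Real.norm_eq_abs]
      have hball := (ofScalars ℝ c).hasFPowerSeriesOnBall (by rw [hrad]; exact ENNReal.zero_lt_top)
      rw [hrad] at hball
      have han : AnalyticOnNhd ℝ (ofScalarsSum (E := ℝ) c) Set.univ := by
        intro y _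
        exact hball.analyticAt_of_mem (by rw [EMetric.mem_ball]; exact edist_lt_top y 0)
      exact han.contDiff
    · -- value
      intro k hk
      have hkne : k ≠ 0 := hk.ne'
      have hRne : R ≠ 0 := hR.ne'
      have heven : ∀ m : ℕ, c (2*m) * k^(2*m)
          = (-1:ℝ)^m * (m+1) * R^(2*m+4) * k^(2*m) / (2*m+5).factorial := by
        intro m
        have h2 : (2*m) % 2 = 0 := by omega
        have h3 : (2*m) / 2 = m := by omega
        rw [hc]
        simp only [if_pos h2, h3]
        push_cast
        ring
      have hodd : ∀ m : ℕ, c (2*m+1) * k^(2*m+1) = 0 := by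
        intro m
        have h2 : (2*m+1) % 2 = 1 := by omega
        rw [hc]
        simp [h2]
      have hsev : Summable (fun m : ℕ => c (2*m) * k^(2*m)) := by
        apply Summable.congr
          (f := fun m : ℕ => (-1:ℝ)^m * (m+1) * R^(2*m+4) * k^(2*m) / (2*m+5).factorial)
        · apply aux_summable (R^4) ((k*R)^2)
          intro m
          have habs : |(-1:ℝ)^m * (m+1) * R^(2*m+4) * k^(2*m) / (2*m+5).factorial|
              = ((m:ℝ)+1) * (R^(2*m+4) * k^(2*m)) / (2*m+5).factorial := by
            rw [abs_div, abs_mul, abs_mul, abs_mul, abs_pow, abs_neg, abs_one, one_pow, one_mul,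
              abs_of_pos (pow_pos hR _), abs_of_pos (pow_pos hk _), Nat.abs_cast, mul_assoc]
            congr 1
            rw [abs_of_nonneg (by positivity)]
          rw [habs]
          calc ((m:ℝ)+1) * (R^(2*m+4) * k^(2*m)) / (2*m+5).factorial
              = (R^4 * ((k*R)^2)^m) * (((m:ℝ)+1) / (2*m+5).factorial) := by
                rw [mul_pow]; ring
          _ ≤ (R^4 * ((k*R)^2)^m) * (1 / m.factorial) := by
                apply mul_le_mul_of_nonneg_left (fact_div_le m (2*m+5) (by omega))
                positivity
          _ = R^4 * (((k*R)^2)^m / m.factorial) := by ring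
        · intro m
          exact (heven m).symm
      have hsod : Summable (fun m : ℕ => c (2*m+1) * k^(2*m+1)) := by
        apply Summable.congr (f := fun _ : ℕ => (0:ℝ)) summable_zero
        intro m
        exact (hodd m).symm
      have hoe := tsum_even_add_odd (f := fun n : ℕ => c n * k^n) hsev hsod
      have hsum : ofScalarsSum c k = ∑' n : ℕ, c n * k^n := by
        rw [ofScalars_sum_eq]
        simp only [smul_eq_mul]
      rw [hsum, ← hoe, tsum_congr hodd, tsum_zero, add_zero, tsum_congr heven]
      have hterm : ∀ m : ℕ, (-1:ℝ)^m * (m+1) * R^(2*m+4) * k^(2*m) / (2*m+5).factorial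
          = (R^4/(k*R)^5) * ((-1:ℝ)^m * (m+1) * (k*R)^(2*m+5) / (2*m+5).factorial) := by
        intro m
        have hfne : ((2*m+5).factorial : ℝ) ≠ 0 := by positivity
        rw [mul_pow, mul_pow]
        field_simp
        ring
      rw [tsum_congr hterm, tsum_mul_left, key (k*R)]
      field_simp
end
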